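/- For the merge model M_r(t,x,y,z) = (t, x³ + 3(r − t²)x + y² − z²) with r ∈ [−1,1], the critical locus is {(t,x,0,0) : t² − x² = r}. For r ≠ 0 it is a smooth hyperbola admitting the parametrization {½(α + r/α, α − r/α, 0, 0) : α ∈ ℝ \ {0}}; for r = 0 it is the union of the diagonal and antidiagonal in the (t,x)-plane; and for r > 0 the map M_r has exactly two cusp points, located at (±√r, 0, 0, 0), all other critical points being fold points. -/

import Mathlib

noncomputable section

/-- The merge model `M_r(t,x,y,z) = (t, x³ + 3(r − t²)x + y² − z²)`. -/
def Mr (r : ℝ) : (Fin 4 → ℝ) → (Fin 2 → ℝ) := fun p =>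
  ![p 0, (p 1) ^ 3 + 3 * (r - (p 0) ^ 2) * p 1 + (p 2) ^ 2 - (p 3) ^ 2]

/-- The critical locus of `M_r`: points where the differential has rank `< 2`. -/
def CritMr (r : ℝ) : Set (Fin 4 → ℝ) :=
  {p | ¬ Function.Surjective (fderiv ℝ (Mr r) p)}

/-- The parametrization `α ↦ ½(α + r/α, α − r/α, 0, 0)` of the critical
hyperbola. -/
def γpar (r α : ℝ) : Fin 4 → ℝ := ![(α + r / α) / 2, (α - r / α) / 2, 0, 0]

/-!
At `p = (t, x, y, z)` the differential of `M_r` is `v ↦ (v₀, ℓ v)` with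
`ℓ = −6tx dt + 3(x² + r − t²) dx + 2y dy − 2z dz`, and since its first component is onto,
it fails to be onto exactly when `ℓ` vanishes on the hyperplane `dt = 0`, i.e. when
`t² − x² = r` and `y = z = 0`. At such a point the kernel of the differential is `{dt = 0}`,
so the derivative of `M_r ∘ γpar r` vanishes exactly where `dt/dα = (1 − r/α²)/2` does,
i.e. at `α² = r`. Points of the hyperbola are recovered from `α = t + x`, `r/α = t − x`.
-/

theorem LinearMap.surjective_iff_exists_of_apply_zero_eq_one {K E : Type*} [Field K]
    [AddCommGroup E] [Module K E] (L : E →ₗ[K] Fin 2 → K) {u : E} (hu : L u 0 = 1) :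
    Function.Surjective L ↔ ∃ v, L v 0 = 0 ∧ L v 1 ≠ 0 := by
  constructor
  · intro hL
    obtain ⟨v, hv⟩ := hL ![0, 1]
    exact ⟨v, by simp [hv], by simp [hv]⟩
  · rintro ⟨v, hv0, hv1⟩ w
    refine ⟨w 0 • u + ((w 1 - w 0 * L u 1) / L v 1) • v, ?_⟩
    ext i
    fin_cases i
    · simp [hu, hv0]
    · simp [hv1]

theorem fderiv_eval {𝕜 ι : Type*} [NontriviallyNormedField 𝕜] [Fintype ι] (i : ι) (p : ι → 𝕜) :
    fderiv 𝕜 (fun q : ι → 𝕜 => q i) p = ContinuousLinearMap.proj i :=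
  (hasFDerivAt_apply i p).fderiv

theorem differentiable_Mr (r : ℝ) : Differentiable ℝ (Mr r) :=
  differentiable_pi.2 fun i => by
    fin_cases i <;>
      simp only [Mr, Fin.zero_eta, Fin.mk_one, Matrix.cons_val_zero, Matrix.cons_val_one] <;>
      fun_prop

theorem fderiv_Mr_apply (r : ℝ) (p v : Fin 4 → ℝ) :
    fderiv ℝ (Mr r) p v = ![v 0, -6 * p 0 * p 1 * v 0 + 3 * (p 1 ^ 2 + r - p 0 ^ 2) * v 1
      + 2 * p 2 * v 2 - 2 * p 3 * v 3] := by
  ext i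
  have h := congrArg (· v) (fderiv_apply (differentiable_Mr r p) i)
  simp only [ContinuousLinearMap.comp_apply, ContinuousLinearMap.proj_apply] at h
  rw [← h]
  fin_cases i <;> simp (disch := fun_prop) [Mr, fderiv_fun_add, fderiv_fun_sub, fderiv_fun_mul,
    fderiv_fun_pow, fderiv_eval]
  ring

theorem mem_CritMr_iff {r : ℝ} {p : Fin 4 → ℝ} :
    p ∈ CritMr r ↔ p 0 ^ 2 - p 1 ^ 2 = r ∧ p 2 = 0 ∧ p 3 = 0 := by
  rw [CritMr, Set.mem_ofPred_eq, ← ContinuousLinearMap.coe_coe,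
    LinearMap.surjective_iff_exists_of_apply_zero_eq_one (u := ![1, 0, 0, 0]) _
      (by simp [fderiv_Mr_apply])]
  simp only [ContinuousLinearMap.coe_coe, fderiv_Mr_apply, Matrix.cons_val_zero,
    Matrix.cons_val_one]
  constructor
  · intro h
    by_contra hp
    set A := p 1 ^ 2 + r - p 0 ^ 2
    -- the second component of the differential sends this vector to `9A² + 4y² + 4z²`
    refine h ⟨![0, 3 * A, 2 * p 2, -2 * p 3], rfl, fun h0 => hp ?_⟩
    simp only [Matrix.cons_val_zero, Matrix.cons_val_one, Matrix.cons_val, mul_zero, zero_add,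
      neg_mul, mul_neg, sub_neg_eq_add] at h0
    have hA : A = 0 := pow_eq_zero_iff two_ne_zero |>.1 <| by
      nlinarith [sq_nonneg A, sq_nonneg (p 2), sq_nonneg (p 3)]
    have h2 : p 2 = 0 := pow_eq_zero_iff two_ne_zero |>.1 <| by
      nlinarith [sq_nonneg A, sq_nonneg (p 2), sq_nonneg (p 3)]
    have h3 : p 3 = 0 := pow_eq_zero_iff two_ne_zero |>.1 <| by
      nlinarith [sq_nonneg A, sq_nonneg (p 2), sq_nonneg (p 3)]
    exact ⟨by linear_combination -hA, h2, h3⟩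
  · rintro ⟨h1, h2, h3⟩ ⟨v, hv0, hv1⟩
    apply hv1
    rw [hv0, h2, h3]
    linear_combination (-3 * v 1) * h1

theorem CritMr_eq (r : ℝ) :
    CritMr r = {p | p 0 ^ 2 - p 1 ^ 2 = r ∧ p 2 = 0 ∧ p 3 = 0} :=
  Set.ext fun _ => mem_CritMr_iff

theorem γpar_mem_CritMr {r α : ℝ} (hα : α ≠ 0) : γpar r α ∈ CritMr r := by
  refine mem_CritMr_iff.2 ⟨?_, rfl, rfl⟩
  simp only [γpar, Matrix.cons_val_zero, Matrix.cons_val_one]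
  field_simp
  ring

theorem CritMr_eq_setOf_γpar {r : ℝ} (hr : r ≠ 0) :
    CritMr r = {p | ∃ α : ℝ, α ≠ 0 ∧ p = γpar r α} := by
  ext p
  constructor
  · intro hp
    obtain ⟨h1, h2, h3⟩ := mem_CritMr_iff.1 hp
    have hα : p 0 + p 1 ≠ 0 := fun h => hr <| by rw [← h1]; linear_combination (p 0 - p 1) * h
    have hdiv : r / (p 0 + p 1) = p 0 - p 1 := by rw [div_eq_iff hα, ← h1]; ring
    refine ⟨p 0 + p 1, hα, ?_⟩
    ext i
    fin_cases i <;> simp [γpar, hdiv, h2, h3]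
  · rintro ⟨α, hα, rfl⟩
    exact γpar_mem_CritMr hα

theorem CritMr_zero :
    CritMr 0 = {p | (p 0 = p 1 ∨ p 0 = -(p 1)) ∧ p 2 = 0 ∧ p 3 = 0} := by
  ext p
  simp only [mem_CritMr_iff, Set.mem_ofPred_eq, sub_eq_zero, sq_eq_sq_iff_eq_or_eq_neg]

theorem fderiv_Mr_apply_eq_zero_iff {r : ℝ} {p : Fin 4 → ℝ} (hp : p ∈ CritMr r)
    (v : Fin 4 → ℝ) : fderiv ℝ (Mr r) p v = 0 ↔ v 0 = 0 := by
  obtain ⟨h1, h2, h3⟩ := mem_CritMr_iff.1 hp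
  refine ⟨fun h => by simpa [fderiv_Mr_apply] using congrFun h 0, fun h0 => ?_⟩
  ext i
  fin_cases i
  · simp [fderiv_Mr_apply, h0]
  · have hA : p 1 ^ 2 + r - p 0 ^ 2 = 0 := by linear_combination -h1
    simp [fderiv_Mr_apply, h0, h2, h3, hA]

theorem hasDerivAt_γpar (r : ℝ) {α : ℝ} (hα : α ≠ 0) :
    HasDerivAt (γpar r) ![(1 - r / α ^ 2) / 2, (1 + r / α ^ 2) / 2, 0, 0] α := by
  have hdiv : HasDerivAt (fun a => r / a) (-(r / α ^ 2)) α := by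
    simpa [div_eq_mul_inv] using (hasDerivAt_inv hα).const_mul r
  refine hasDerivAt_pi.2 fun i => ?_
  fin_cases i
  · simpa [γpar, sub_eq_add_neg] using ((hasDerivAt_id α).add hdiv).div_const 2
  · simpa [γpar] using ((hasDerivAt_id α).sub hdiv).div_const 2
  · simpa [γpar] using hasDerivAt_const α (0 : ℝ)
  · simpa [γpar] using hasDerivAt_const α (0 : ℝ)

theorem deriv_Mr_comp_γpar_eq_zero_iff {r α : ℝ} (hα : α ≠ 0) :
    deriv (fun a => Mr r (γpar r a)) α = 0 ↔ α ^ 2 = r := by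
  rw [HasDerivAt.deriv (f := fun a => Mr r (γpar r a))
      ((differentiable_Mr r _).hasFDerivAt.comp_hasDerivAt α (hasDerivAt_γpar r hα)),
    fderiv_Mr_apply_eq_zero_iff (γpar_mem_CritMr hα)]
  simp only [Matrix.cons_val_zero, div_eq_zero_iff, two_ne_zero, or_false, sub_eq_zero,
    eq_div_iff (pow_ne_zero 2 hα), one_mul]

theorem γpar_of_sq_eq {r α : ℝ} (h : α ^ 2 = r) : γpar r α = ![α, 0, 0, 0] := by
  subst h
  ext i
  fin_cases i <;> simp [γpar, sq, mul_self_div_self]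

theorem merge_model_critical_locus_general (r : ℝ) :
    CritMr r = {p | (p 0) ^ 2 - (p 1) ^ 2 = r ∧ p 2 = 0 ∧ p 3 = 0} ∧
    (r ≠ 0 → CritMr r = {p | ∃ α : ℝ, α ≠ 0 ∧ p = γpar r α}) ∧
    (r = 0 → CritMr r = {p | (p 0 = p 1 ∨ p 0 = -(p 1)) ∧ p 2 = 0 ∧ p 3 = 0}) ∧
    (0 < r → ∀ α : ℝ, α ≠ 0 →
        (deriv (fun a : ℝ => Mr r (γpar r a)) α = 0 ↔
          α = Real.sqrt r ∨ α = -(Real.sqrt r))) ∧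
    (0 < r → γpar r (Real.sqrt r) = ![Real.sqrt r, 0, 0, 0] ∧
        γpar r (-(Real.sqrt r)) = ![-(Real.sqrt r), 0, 0, 0]) := by
  refine ⟨CritMr_eq r, CritMr_eq_setOf_γpar, fun h => h ▸ CritMr_zero, fun hr α hα => ?_,
    fun hr => ⟨γpar_of_sq_eq (Real.sq_sqrt hr.le), γpar_of_sq_eq ?_⟩⟩
  · rw [deriv_Mr_comp_γpar_eq_zero_iff hα, ← sq_eq_sq_iff_eq_or_eq_neg, Real.sq_sqrt hr.le]
  · rw [neg_sq, Real.sq_sqrt hr.le]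

/--
For `r ∈ [−1,1]`: the critical locus of `M_r` is
`{(t,x,0,0) : t² − x² = r}`; for `r ≠ 0` it is parametrized by
`α ↦ ½(α + r/α, α − r/α, 0, 0)` (`α ≠ 0`); for `r = 0` it is the union of the
diagonal and antidiagonal of the `(t,x)`-plane; and for `r > 0` the restriction
of `M_r` to its critical locus (in the above parametrization) has vanishing
derivative exactly at `α = ±√r`, i.e. the two points `(±√r, 0, 0, 0)` are the
only cusp points and all other critical points are fold points.
-/
theorem merge_model_critical_locus (r : ℝ) (hr : r ∈ Set.Icc (-1 : ℝ) 1) :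
    CritMr r = {p | (p 0) ^ 2 - (p 1) ^ 2 = r ∧ p 2 = 0 ∧ p 3 = 0} ∧
    (r ≠ 0 → CritMr r = {p | ∃ α : ℝ, α ≠ 0 ∧ p = γpar r α}) ∧
    (r = 0 → CritMr r = {p | (p 0 = p 1 ∨ p 0 = -(p 1)) ∧ p 2 = 0 ∧ p 3 = 0}) ∧
    (0 < r → ∀ α : ℝ, α ≠ 0 →
        (deriv (fun a : ℝ => Mr r (γpar r a)) α = 0 ↔
          α = Real.sqrt r ∨ α = -(Real.sqrt r))) ∧
    (0 < r → γpar r (Real.sqrt r) = ![Real.sqrt r, 0, 0, 0] ∧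
        γpar r (-(Real.sqrt r)) = ![-(Real.sqrt r), 0, 0, 0]) :=
  merge_model_critical_locus_general r
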